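/- arXiv:1812.00966 — 3 statements merged into one kernel-verified Lean document; each statement's English description precedes it below -/
import Mathlib

section
/- Let 0 ≤ p < 1, ν ∈ ℕ with ν ≥ 1, and M ∈ ℕ with M ≥ 1, and let T be a random variable with values in ℕ ∪ {∞} such that for every t ∈ ℕ, P(T > t + M) ≤ (1 − (1/2)·(1−p)^{νM})·P(T > t). Then E[T] ≤ 2M·(1−p)^{−νM} ≤ 2M·e^{νpM/(1−p)}. -/
/-! A phase of `M` steps multiplies the tail `P(T > t)` by at most `c = 1 - q/2`, where
`q = (1 - p)^(νM)`, so `P(T > t) ≤ c ^ ⌊t / M⌋`. Summing the tail, every exponent `k` occurs for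
`M` values of `t`, giving `E[T] ≤ M / (1 - c) = 2M / q`; the second bound is `1 + x ≤ eˣ` at
`x = p / (1 - p)`. -/

open MeasureTheory
open scoped ENNReal

theorem le_mul_pow_div_of_antitone_of_le_mul_add {α : Type*} [CommMonoidWithZero α]
    [PartialOrder α] [PosMulMono α] {f : ℕ → α} (hf : Antitone f) {r : α} {M : ℕ}
    (hr : 0 ≤ r) (h : ∀ t, f (t + M) ≤ r * f t) (t : ℕ) :
    f t ≤ f 0 * r ^ (t / M) := by
  have blocks : ∀ k, f (k * M) ≤ f 0 * r ^ k := by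
    intro k
    induction k with
    | zero => simp
    | succ k ih =>
      calc f ((k + 1) * M) = f (k * M + M) := by rw [add_one_mul]
        _ ≤ r * f (k * M) := h _
        _ ≤ r * (f 0 * r ^ k) := mul_le_mul_of_nonneg_left ih hr
        _ = f 0 * r ^ (k + 1) := by rw [mul_left_comm, ← pow_succ']
  exact (hf (Nat.div_mul_le_self t M)).trans (blocks _)

theorem ENNReal.tsum_pow_div (r : ℝ≥0∞) (M : ℕ) [NeZero M] :
    ∑' t : ℕ, r ^ (t / M) = M * (1 - r)⁻¹ := by
  calc ∑' t : ℕ, r ^ (t / M)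
      = ∑' x : ℕ × Fin M, r ^ x.1 := (Nat.divModEquiv M).tsum_eq fun x => r ^ x.1
    _ = ∑' k : ℕ, M * r ^ k := by
      rw [ENNReal.tsum_prod (f := fun k (_ : Fin M) => r ^ k)]
      simp
    _ = M * (1 - r)⁻¹ := by rw [ENNReal.tsum_mul_left, ENNReal.tsum_geometric]

theorem ENNReal.natCast_mul_inv_one_sub_ofReal_one_sub_half_mul {q : ℝ} (hq0 : 0 < q)
    (hq2 : q ≤ 2) (M : ℕ) :
    M * (1 - ENNReal.ofReal (1 - 1 / 2 * q))⁻¹ = ENNReal.ofReal (2 * M * q⁻¹) := by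
  rw [ENNReal.ofReal_sub _ (by positivity), ENNReal.ofReal_one,
    ENNReal.sub_sub_cancel ENNReal.one_ne_top (ENNReal.ofReal_le_one.mpr (by linarith)),
    ← ENNReal.ofReal_inv_of_pos (by positivity), ← ENNReal.ofReal_natCast M,
    ← ENNReal.ofReal_mul (by positivity)]
  congr 1
  field_simp

theorem Real.inv_one_sub_pow_le_exp {p : ℝ} (hp : p < 1) (n : ℕ) :
    ((1 - p) ^ n)⁻¹ ≤ Real.exp (n * p / (1 - p)) := by
  have hpos : 0 < 1 - p := by linarith
  have base : (1 - p)⁻¹ ≤ Real.exp (p / (1 - p)) :=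
    calc (1 - p)⁻¹ = p / (1 - p) + 1 := by field_simp; ring
      _ ≤ _ := Real.add_one_le_exp _
  calc ((1 - p) ^ n)⁻¹ = ((1 - p)⁻¹) ^ n := (inv_pow _ _).symm
    _ ≤ Real.exp (p / (1 - p)) ^ n := by gcongr
    _ = Real.exp (n * p / (1 - p)) := by rw [← Real.exp_nat_mul, mul_div_assoc]

theorem expected_time_under_noise_nu_evaluations_general
    {Ω : Type*} [MeasurableSpace Ω] (μ : Measure Ω) [IsProbabilityMeasure μ]
    (T : Ω → ℕ∞) (p : ℝ) (ν M : ℕ)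
    (hp0 : 0 ≤ p) (hp1 : p < 1) (hM : 1 ≤ M)
    (hstep : ∀ t : ℕ,
      μ {ω | ((t + M : ℕ) : ℕ∞) < T ω}
        ≤ ENNReal.ofReal (1 - 1 / 2 * (1 - p) ^ (ν * M)) * μ {ω | ((t : ℕ) : ℕ∞) < T ω}) :
    (∑' t : ℕ, μ {ω | ((t : ℕ) : ℕ∞) < T ω})
        ≤ ENNReal.ofReal (2 * M * ((1 - p) ^ (ν * M))⁻¹)
      ∧ ENNReal.ofReal (2 * M * ((1 - p) ^ (ν * M))⁻¹)
        ≤ ENNReal.ofReal (2 * M * Real.exp (ν * p * M / (1 - p))) := by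
  have : NeZero M := ⟨by omega⟩
  set q := (1 - p) ^ (ν * M)
  have hq0 : 0 < q := pow_pos (by linarith) _
  have hq1 : q ≤ 1 := pow_le_one₀ (by linarith) (by linarith)
  have tail_antitone : Antitone fun t : ℕ => μ {ω | ((t : ℕ) : ℕ∞) < T ω} :=
    fun _ _ hst => measure_mono <|
      Set.ofPred_subset_ofPred.mpr fun _ => (Nat.cast_le.mpr hst).trans_lt
  have tail_le (t : ℕ) :
      μ {ω | ((t : ℕ) : ℕ∞) < T ω} ≤ ENNReal.ofReal (1 - 1 / 2 * q) ^ (t / M) :=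
    (le_mul_pow_div_of_antitone_of_le_mul_add tail_antitone zero_le hstep t).trans
      (mul_le_of_le_one_left zero_le prob_le_one)
  refine ⟨?_, ENNReal.ofReal_le_ofReal ?_⟩
  · calc (∑' t : ℕ, μ {ω | ((t : ℕ) : ℕ∞) < T ω})
        ≤ ∑' t : ℕ, ENNReal.ofReal (1 - 1 / 2 * q) ^ (t / M) := ENNReal.tsum_le_tsum tail_le
      _ = ENNReal.ofReal (2 * M * q⁻¹) := by
        rw [ENNReal.tsum_pow_div,
          ENNReal.natCast_mul_inv_one_sub_ofReal_one_sub_half_mul hq0 (by linarith)]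
  · calc 2 * M * q⁻¹ ≤ 2 * M * Real.exp (↑(ν * M) * p / (1 - p)) := by
          gcongr; exact Real.inv_one_sub_pow_le_exp hp1 _
      _ = 2 * M * Real.exp (ν * p * M / (1 - p)) := by push_cast; ring_nf

/-- **Theorem (expected optimisation time under prior noise with `ν` evaluations
per iteration).**
Let `0 ≤ p < 1`, `ν ≥ 1` and `M ≥ 1`, and let `T` be a random variable with
values in `ℕ ∪ {∞}` such that for every `t`,
`P(T > t + M) ≤ (1 − (1/2)·(1−p)^{νM}) · P(T > t)`
(a phase of `M` noise-free iterations, each evaluating up to `ν` search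
points, succeeds with probability at least `(1/2)·(1−p)^{νM}`). Then the
expectation `E[T] = Σ_{t∈ℕ} P(T > t)` satisfies
`E[T] ≤ 2M·(1−p)^{−νM} ≤ 2M·e^{νpM/(1−p)}`. -/
theorem expected_time_under_noise_nu_evaluations
    {Ω : Type*} [MeasurableSpace Ω] (μ : Measure Ω) [IsProbabilityMeasure μ]
    (T : Ω → ℕ∞) (p : ℝ) (ν M : ℕ)
    (hp0 : 0 ≤ p) (hp1 : p < 1) (hν : 1 ≤ ν) (hM : 1 ≤ M)
    (hstep : ∀ t : ℕ,
      μ {ω | ((t + M : ℕ) : ℕ∞) < T ω}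
        ≤ ENNReal.ofReal (1 - 1 / 2 * (1 - p) ^ (ν * M)) * μ {ω | ((t : ℕ) : ℕ∞) < T ω}) :
    (∑' t : ℕ, μ {ω | ((t : ℕ) : ℕ∞) < T ω})
        ≤ ENNReal.ofReal (2 * M * ((1 - p) ^ (ν * M))⁻¹)
      ∧ ENNReal.ofReal (2 * M * ((1 - p) ^ (ν * M))⁻¹)
        ≤ ENNReal.ofReal (2 * M * Real.exp (ν * p * M / (1 - p))) :=
  expected_time_under_noise_nu_evaluations_general μ T p ν M hp0 hp1 hM hstep
end

section
/- There exist constants C, c > 0 such that for every n ≥ 1 and every real p with 0 ≤ p ≤ 1/2, the expected optimisation time of the (1+1) EA with one-bit prior noise probability p on LeadingOnes is at most C·n²·e^{c·p·n²}. -/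
open Finset ENNReal

/-- A search point: a bit string of length `n`. -/
abbrev Point (n : ℕ) := Fin n → Bool

/-- The LeadingOnes fitness: the length of the longest all-ones prefix. -/
def LO {n : ℕ} (x : Point n) : ℕ :=
  (Finset.univ.filter fun i : Fin n => ∀ j : Fin n, j ≤ i → x j = true).card

/-- The all-ones string, the unique global optimum of LeadingOnes. -/
def allOnes (n : ℕ) : Point n := fun _ => true

/-- Probability that standard bit mutation (flip each bit independently with
probability `1/n`) turns `x` into `y`. -/
noncomputable def mutProb (n : ℕ) (x y : Point n) : ℝ :=
  (1 / n) ^ hammingDist x y * (1 - 1 / n) ^ (n - hammingDist x y)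

/-- Probability that one-bit prior noise with probability `p` turns `x` into `u`:
with probability `1 - p` no noise occurs, otherwise one uniformly random bit flips. -/
noncomputable def oneBitNoise (n : ℕ) (p : ℝ) (x u : Point n) : ℝ :=
  (if u = x then 1 - p else 0) + (if hammingDist x u = 1 then p / n else 0)

/-- Probability that offspring `y` is accepted against parent `x`, i.e. that the
noisy fitness of `y` is at least the noisy fitness of `x` (noise applied
independently to parent and offspring). -/
noncomputable def accProb (n : ℕ) (noise : Point n → Point n → ℝ)
    (f : Point n → ℝ) (x y : Point n) : ℝ :=
  ∑ u : Point n, ∑ v : Point n,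
    noise x u * noise y v * (if f u ≤ f v then 1 else 0)

/-- One-generation transition probability of a (1+1)-type algorithm with mutation
kernel `mutK`, prior-noise kernel `noise` and fitness `f`: mutation creates an
offspring, which replaces the parent iff its noisy fitness is at least the
parent's noisy fitness. -/
noncomputable def step (n : ℕ) (mutK noise : Point n → Point n → ℝ)
    (f : Point n → ℝ) (x z : Point n) : ℝ :=
  mutK x z * accProb n noise f x z
    + (if z = x then ∑ y : Point n, mutK x y * (1 - accProb n noise f x y) else 0)

/-- One-generation transition probability of the (1+1) EA with one-bit prior
noise probability `p` on LeadingOnes. -/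
noncomputable def stepEA (n : ℕ) (p : ℝ) : Point n → Point n → ℝ :=
  step n (mutProb n) (oneBitNoise n p) fun x => (LO x : ℝ)

/-- Probability that a Markov chain with transition matrix `P` started in `x`
does not visit `opt` within the first `t` generations (time `0` included). -/
noncomputable def survive (n : ℕ) (P : Point n → Point n → ℝ) (opt : Point n) :
    ℕ → Point n → ℝ
  | 0, x => if x = opt then 0 else 1
  | t + 1, x => if x = opt then 0 else ∑ y : Point n, P x y * survive n P opt t y

/-- Expected optimisation time, measured in fitness evaluations
(`evalsPerGen` evaluations per generation), of a Markov chain with transition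
matrix `P` started from a uniformly random search point, until it first hits
`opt`; computed as `evalsPerGen · Σ_t P(T > t)`. -/
noncomputable def expectedTime (n : ℕ) (P : Point n → Point n → ℝ)
    (opt : Point n) (evalsPerGen : ℕ) : ℝ≥0∞ :=
  (evalsPerGen : ℝ≥0∞) * ∑' t : ℕ, ENNReal.ofReal
    ((Fintype.card (Point n) : ℝ)⁻¹ * ∑ x : Point n, survive n P opt t x)

/-- Expected optimisation time (number of fitness evaluations, two per
generation) of the (1+1) EA with one-bit prior noise probability `p` on
LeadingOnes with problem size `n`, from a uniformly random initial search point. -/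
noncomputable def EAtime (n : ℕ) (p : ℝ) : ℝ≥0∞ :=
  expectedTime n (stepEA n p) (allOnes n) 2

/-!
Measure progress by the potential `S` on LeadingOnes values given by `S 0 = 0` and
`S (ℓ + 1) = S ℓ + A * (1 + q * S ℓ)`, with `A = 4 e n` and `q = 2 p`. From a non-optimal
point the EA raises its LeadingOnes value with probability at least `1 / A` (flip exactly the
first zero, and let noise leave both evaluations alone, which happens with probability
`(1 - p)² ≥ 1 / 4`), and lowers it with probability at most `q` (a worse offspring is accepted
only if noise hits the parent or the offspring). A fall from level `ℓ` costs at most `S ℓ`, a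
rise gains at least `A * (1 + q * S ℓ)`, so `S n - S (LO x)` decreases by at least one per
generation in expectation. By additive drift the expected number of generations is at most
`S n ≤ A n (1 + A q) ^ n ≤ 4 e n² exp (8 e p n²)`.
-/

def flipEquiv (n : ℕ) (x : Point n) : Point n ≃ Finset (Fin n) where
  toFun y := univ.filter fun i => x i ≠ y i
  invFun s i := if i ∈ s then !x i else x i
  left_inv y := by
    funext i
    cases hx : x i <;> cases hy : y i <;> simp [hx, hy]
  right_inv s := by
    ext i
    by_cases h : i ∈ s <;> simp [h]

lemma sum_hammingDist_eq_sum_choose {M : Type*} [AddCommMonoid M] {n : ℕ} (x : Point n)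
    (F : ℕ → M) :
    ∑ y : Point n, F (hammingDist x y) = ∑ k ∈ range (n + 1), n.choose k • F k := by
  calc ∑ y : Point n, F (hammingDist x y) = ∑ y, F (flipEquiv n x y).card := rfl
    _ = ∑ s ∈ (univ : Finset (Fin n)).powerset, F s.card := by
      rw [Equiv.sum_comp (flipEquiv n x) (fun s => F s.card), powerset_univ]
    _ = ∑ k ∈ range (n + 1), n.choose k • F k := by
      rw [sum_powerset_apply_card, card_univ, Fintype.card_fin]

lemma hammingDist_update_of_ne {n : ℕ} {x : Point n} {k : Fin n} {b : Bool} (h : x k ≠ b) :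
    hammingDist x (Function.update x k b) = 1 := by
  have : univ.filter (fun i => x i ≠ Function.update x k b i) = {k} := by
    ext i
    by_cases hi : i = k
    · subst hi; simp [h]
    · simp [hi]
  rw [hammingDist, this, card_singleton]

section Kernels

variable {n : ℕ}

lemma mutProb_nonneg (x y : Point n) : 0 ≤ mutProb n x y :=
  mul_nonneg (pow_nonneg (Nat.one_div_cast_nonneg n) _)
    (pow_nonneg (Nat.one_sub_one_div_cast_nonneg n) _)

lemma sum_mutProb (x : Point n) : ∑ y, mutProb n x y = 1 := by
  calc ∑ y, mutProb n x y
      = ∑ k ∈ range (n + 1), n.choose k • ((1 / n : ℝ) ^ k * (1 - 1 / n) ^ (n - k)) :=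
        sum_hammingDist_eq_sum_choose x fun k => (1 / n : ℝ) ^ k * (1 - 1 / n) ^ (n - k)
    _ = (1 / n + (1 - 1 / n)) ^ n := by
      rw [add_pow]
      exact sum_congr rfl fun k _ => by rw [nsmul_eq_mul]; ring
    _ = 1 := by ring

lemma mutProb_of_hammingDist_eq_one {x y : Point n} (h : hammingDist x y = 1) :
    mutProb n x y = 1 / n * (1 - 1 / n) ^ (n - 1) := by
  rw [mutProb, h, pow_one]

variable {p : ℝ}

lemma oneBitNoise_nonneg (hp0 : 0 ≤ p) (hp1 : p ≤ 1) (x u : Point n) :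
    0 ≤ oneBitNoise n p x u := by
  have : 0 ≤ p / n := by positivity
  unfold oneBitNoise
  split_ifs <;> linarith

lemma oneBitNoise_self (x : Point n) : oneBitNoise n p x x = 1 - p := by
  simp [oneBitNoise]

lemma sum_oneBitNoise (hn : n ≠ 0) (x : Point n) : ∑ u, oneBitNoise n p x u = 1 := by
  have flips : ∑ u : Point n, (if hammingDist x u = 1 then p / n else 0) = p := by
    rw [sum_hammingDist_eq_sum_choose x fun k => if k = 1 then p / n else 0,
      sum_eq_single_of_mem 1 (by simp [Nat.pos_of_ne_zero hn]) fun k _ hk => by simp [hk]]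
    simp only [if_true, Nat.choose_one_right, nsmul_eq_mul]
    field_simp
  simp only [oneBitNoise, sum_add_distrib, sum_ite_eq', mem_univ, if_true, flips]
  ring

end Kernels

section Acceptance

variable {n : ℕ} {N : Point n → Point n → ℝ} {f : Point n → ℝ}

lemma accProb_eq_sum_prod (x y : Point n) :
    accProb n N f x y =
      ∑ z : Point n × Point n, N x z.1 * N y z.2 * if f z.1 ≤ f z.2 then 1 else 0 :=
  (Fintype.sum_prod_type' _).symm

lemma accProb_nonneg (hN : ∀ x u, 0 ≤ N x u) (x y : Point n) : 0 ≤ accProb n N f x y :=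
  sum_nonneg fun u _ => sum_nonneg fun v _ => by positivity [hN x u, hN y v]

lemma sum_prod_mul_eq_one (hN1 : ∀ x, ∑ u, N x u = 1) (x y : Point n) :
    ∑ z : Point n × Point n, N x z.1 * N y z.2 = 1 := by
  rw [Fintype.sum_prod_type' fun u v => N x u * N y v, ← sum_mul_sum, hN1, hN1, one_mul]

lemma accProb_le_one (hN : ∀ x u, 0 ≤ N x u) (hN1 : ∀ x, ∑ u, N x u = 1) (x y : Point n) :
    accProb n N f x y ≤ 1 := by
  rw [accProb_eq_sum_prod]
  refine (sum_le_sum fun z _ => ?_).trans (sum_prod_mul_eq_one hN1 x y).le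
  apply mul_le_of_le_one_right (mul_nonneg (hN _ _) (hN _ _))
  split_ifs <;> norm_num

lemma mul_le_accProb (hN : ∀ x u, 0 ≤ N x u) {x y : Point n} (h : f x ≤ f y) :
    N x x * N y y ≤ accProb n N f x y := by
  rw [accProb_eq_sum_prod]
  calc N x x * N y y = N x x * N y y * if f x ≤ f y then 1 else 0 := by simp [h]
    _ ≤ _ := single_le_sum (f := fun z : Point n × Point n =>
          N x z.1 * N y z.2 * if f z.1 ≤ f z.2 then 1 else 0)
        (fun z _ => by positivity [hN x z.1, hN y z.2]) (mem_univ (x, y))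

lemma accProb_add_mul_le_one (hN : ∀ x u, 0 ≤ N x u) (hN1 : ∀ x, ∑ u, N x u = 1)
    {x y : Point n} (h : f y < f x) :
    accProb n N f x y + N x x * N y y ≤ 1 := by
  have hxy := mem_univ (x, y)
  calc accProb n N f x y + N x x * N y y
      = N x x * N y y + ∑ z ∈ univ.erase (x, y),
          N x z.1 * N y z.2 * if f z.1 ≤ f z.2 then 1 else 0 := by
        rw [accProb_eq_sum_prod, ← add_sum_erase _ _ hxy]
        simp [not_le.2 h, add_comm]
    _ ≤ N x x * N y y + ∑ z ∈ univ.erase (x, y), N x z.1 * N y z.2 := by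
        refine add_le_add le_rfl (sum_le_sum fun z _ => ?_)
        apply mul_le_of_le_one_right (mul_nonneg (hN _ _) (hN _ _))
        split_ifs <;> norm_num
    _ = 1 := by rw [add_sum_erase _ (fun z => N x z.1 * N y z.2) hxy, sum_prod_mul_eq_one hN1]

end Acceptance

section Step

variable {n : ℕ} {mutK N : Point n → Point n → ℝ} {f : Point n → ℝ}

lemma step_of_ne {x z : Point n} (h : z ≠ x) :
    step n mutK N f x z = mutK x z * accProb n N f x z := by
  simp [step, h]

lemma step_nonneg (hmut : ∀ x y, 0 ≤ mutK x y) (hN : ∀ x u, 0 ≤ N x u)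
    (hN1 : ∀ x, ∑ u, N x u = 1) (x z : Point n) : 0 ≤ step n mutK N f x z := by
  have hstay : 0 ≤ ∑ y, mutK x y * (1 - accProb n N f x y) :=
    sum_nonneg fun y _ => mul_nonneg (hmut x y) (sub_nonneg.2 (accProb_le_one hN hN1 x y))
  unfold step
  have := mul_nonneg (hmut x z) (accProb_nonneg (f := f) hN x z)
  split_ifs <;> linarith

lemma sum_step (hmut1 : ∀ x, ∑ y, mutK x y = 1) (x : Point n) :
    ∑ z, step n mutK N f x z = 1 := by
  simp only [step, sum_add_distrib, sum_ite_eq', mem_univ, if_true, mul_sub, mul_one,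
    sum_sub_distrib, hmut1]
  ring

lemma sum_step_le (hmut : ∀ x y, 0 ≤ mutK x y) (hmut1 : ∀ x, ∑ y, mutK x y = 1)
    {x : Point n} {s : Finset (Point n)} (hx : x ∉ s) {δ : ℝ} (hδ0 : 0 ≤ δ)
    (hδ : ∀ y ∈ s, accProb n N f x y ≤ δ) :
    ∑ y ∈ s, step n mutK N f x y ≤ δ :=
  calc ∑ y ∈ s, step n mutK N f x y = ∑ y ∈ s, mutK x y * accProb n N f x y :=
        sum_congr rfl fun y hy => step_of_ne fun h => hx (h ▸ hy)
    _ ≤ ∑ y ∈ s, mutK x y * δ := by gcongr with y hy; exacts [hmut x y, hδ y hy]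
    _ ≤ ∑ y, mutK x y * δ := sum_le_univ_sum_of_nonneg fun y => mul_nonneg (hmut x y) hδ0
    _ = δ := by rw [← sum_mul, hmut1, one_mul]

end Step

section LeadingOnes

variable {n : ℕ}

lemma LO_le (x : Point n) : LO x ≤ n :=
  (card_filter_le _ _).trans_eq (card_fin n)

lemma exists_first_false {x : Point n} (hx : x ≠ allOnes n) :
    ∃ k, x k = false ∧ ∀ j < k, x j = true := by
  have hne : (univ.filter fun i => x i = false).Nonempty := by
    by_contra h
    exact hx (funext fun i => by simpa [Finset.Nonempty, allOnes] using fun hi => h ⟨i, hi⟩)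
  obtain ⟨k, hk, hmin⟩ := exists_min_image _ id hne
  refine ⟨k, (mem_filter.1 hk).2, fun j hj => ?_⟩
  by_contra hjk
  exact (hmin j (by simpa using hjk)).not_gt hj

lemma LO_eq_of_first_false {x : Point n} {k : Fin n} (hk : x k = false)
    (hlt : ∀ j < k, x j = true) : LO x = k := by
  have : univ.filter (fun i : Fin n => ∀ j ≤ i, x j = true) = Iio k := by
    ext i
    simp only [mem_filter, mem_univ, true_and, mem_Iio]
    exact ⟨fun h => lt_of_not_ge fun hki => by simp [h k hki] at hk,
      fun hik j hji => hlt j (hji.trans_lt hik)⟩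
  rw [LO, this, Fin.card_Iio]

lemma lt_LO_update {x : Point n} {k : Fin n} (hlt : ∀ j < k, x j = true) :
    (k : ℕ) < LO (Function.update x k true) := by
  have : Iic k ⊆ univ.filter fun i => ∀ j ≤ i, Function.update x k true j = true := by
    intro i hi
    simp only [mem_filter, mem_univ, true_and]
    intro j hji
    rcases (hji.trans (mem_Iic.1 hi)).lt_or_eq with hjk | rfl
    · rw [Function.update_of_ne hjk.ne, hlt j hjk]
    · exact Function.update_self ..
  exact Nat.lt_of_succ_le ((Fin.card_Iic k).symm.trans_le (card_le_card this))

end LeadingOnes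

lemma exp_neg_one_le_one_sub_inv_pow {n : ℕ} (hn : n ≠ 0) :
    Real.exp (-1) ≤ (1 - 1 / n) ^ (n - 1) := by
  obtain ⟨m, rfl⟩ := Nat.exists_eq_succ_of_ne_zero hn
  rcases Nat.eq_zero_or_pos m with rfl | hm
  · simp
  -- `1 - 1 / (m + 1)` is the reciprocal of `1 + 1 / m`, and `(1 + 1 / m) ^ m ≤ e`
  have hrecip : (1 - 1 / ((m + 1 : ℕ) : ℝ)) = (1 + (m : ℝ)⁻¹)⁻¹ := by
    have : (m : ℝ) ≠ 0 := by positivity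
    push_cast
    field_simp
    ring
  rw [Nat.succ_sub_one, hrecip, inv_pow, Real.exp_neg]
  exact inv_anti₀ (by positivity) Real.one_add_inv_pow_le_exp

noncomputable def levelPotential (A q : ℝ) : ℕ → ℝ
  | 0 => 0
  | l + 1 => levelPotential A q l + A * (1 + q * levelPotential A q l)

section LevelPotential

variable {A q : ℝ}

lemma levelPotential_succ_sub (l : ℕ) :
    levelPotential A q (l + 1) - levelPotential A q l = A * (1 + q * levelPotential A q l) := by
  rw [levelPotential]; ring

lemma levelPotential_nonneg (hA : 0 ≤ A) (hq : 0 ≤ q) (l : ℕ) : 0 ≤ levelPotential A q l := by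
  induction l with
  | zero => rfl
  | succ l ih => rw [levelPotential]; positivity

lemma levelPotential_mono (hA : 0 ≤ A) (hq : 0 ≤ q) : Monotone (levelPotential A q) :=
  monotone_nat_of_le_succ fun l => by
    rw [← sub_nonneg, levelPotential_succ_sub]
    have := levelPotential_nonneg hA hq l
    positivity

lemma levelPotential_le_mul_pow (hA : 0 ≤ A) (hq : 0 ≤ q) (l : ℕ) :
    levelPotential A q l ≤ A * l * (1 + A * q) ^ l := by
  have hr : 1 ≤ 1 + A * q := le_add_of_nonneg_right (by positivity)
  induction l with
  | zero => simp [levelPotential]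
  | succ l ih =>
    calc levelPotential A q (l + 1) = levelPotential A q l * (1 + A * q) + A := by
          rw [levelPotential]; ring
      _ ≤ A * l * (1 + A * q) ^ l * (1 + A * q) + A * (1 + A * q) ^ (l + 1) := by
          gcongr
          exact le_mul_of_one_le_right hA (one_le_pow₀ hr)
      _ = A * ↑(l + 1) * (1 + A * q) ^ (l + 1) := by push_cast; ring

lemma levelPotential_le_mul_exp (hA : 0 ≤ A) (hq : 0 ≤ q) (l : ℕ) :
    levelPotential A q l ≤ A * l * Real.exp (A * q * l) :=
  calc levelPotential A q l ≤ A * l * (1 + A * q) ^ l := levelPotential_le_mul_pow hA hq l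
    _ ≤ A * l * Real.exp (A * q) ^ l := by
        gcongr
        linarith [Real.add_one_le_exp (A * q)]
    _ = A * l * Real.exp (A * q * l) := by rw [← Real.exp_nat_mul, mul_comm (l : ℝ)]

lemma levelPotential_add_one_le_sum {α : Type*} [Fintype α] (hA : 0 < A) (hq : 0 ≤ q)
    {w : α → ℝ} (hw : ∀ a, 0 ≤ w a) (hw1 : ∑ a, w a = 1) (L : α → ℕ) (ℓ : ℕ)
    (hdown : ∑ a ∈ univ.filter (fun a => L a < ℓ), w a ≤ q)
    (hup : A⁻¹ ≤ ∑ a ∈ univ.filter (fun a => ℓ < L a), w a) :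
    levelPotential A q ℓ + 1 ≤ ∑ a, w a * levelPotential A q (L a) := by
  set S := levelPotential A q
  set d := S (ℓ + 1) - S ℓ
  have hS0 : ∀ l, 0 ≤ S l := levelPotential_nonneg hA.le hq
  have hd : d = A * (1 + q * S ℓ) := levelPotential_succ_sub ℓ
  have hd0 : 0 ≤ d := by rw [hd]; have := hS0 ℓ; positivity
  have hpoint :
      ∀ a, S ℓ - (if L a < ℓ then S ℓ else 0) + (if ℓ < L a then d else 0) ≤ S (L a) := by
    intro a
    rcases lt_trichotomy (L a) ℓ with h | h | h
    · simp [h, h.not_gt, hS0]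
    · simp [h]
    · have := levelPotential_mono hA.le hq (Nat.succ_le_of_lt h)
      simp only [h, h.not_gt, if_true, if_false]
      linarith
  calc S ℓ + 1 = S ℓ * 1 - S ℓ * q + d * A⁻¹ := by rw [hd]; field_simp; ring
    _ ≤ S ℓ * ∑ a, w a - S ℓ * ∑ a ∈ univ.filter (fun a => L a < ℓ), w a
          + d * ∑ a ∈ univ.filter (fun a => ℓ < L a), w a := by
        rw [hw1]; gcongr; exact hS0 ℓ
    _ = ∑ a, w a * (S ℓ - (if L a < ℓ then S ℓ else 0) + (if ℓ < L a then d else 0)) := by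
        simp only [sum_filter, mul_sum, ← sum_sub_distrib, ← sum_add_distrib]
        exact sum_congr rfl fun a _ => by split_ifs <;> ring
    _ ≤ ∑ a, w a * S (L a) := sum_le_sum fun a _ => mul_le_mul_of_nonneg_left (hpoint a) (hw a)

end LevelPotential

section AdditiveDrift

variable {n : ℕ} {P : Point n → Point n → ℝ} {opt : Point n}

lemma survive_nonneg (hP : ∀ x y, 0 ≤ P x y) (t : ℕ) (x : Point n) :
    0 ≤ survive n P opt t x := by
  induction t generalizing x with
  | zero => unfold survive; split_ifs <;> norm_num
  | succ t ih =>
    unfold survive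
    split_ifs
    exacts [le_rfl, sum_nonneg fun y _ => mul_nonneg (hP x y) (ih y)]

lemma sum_range_survive_le (hP : ∀ x y, 0 ≤ P x y) {g : Point n → ℝ} (hg : ∀ x, 0 ≤ g x)
    (hdrift : ∀ x, x ≠ opt → ∑ y, P x y * g y ≤ g x - 1) (T : ℕ) (x : Point n) :
    ∑ t ∈ range T, survive n P opt t x ≤ g x := by
  induction T generalizing x with
  | zero => simpa using hg x
  | succ T ih =>
    by_cases hx : x = opt
    · have : ∀ t, survive n P opt t x = 0 := fun t => by cases t <;> simp [survive, hx]
      simpa [this] using hg x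
    calc ∑ t ∈ range (T + 1), survive n P opt t x
        = 1 + ∑ y, P x y * ∑ t ∈ range T, survive n P opt t y := by
          simp only [sum_range_succ', survive, if_neg hx, mul_sum]
          rw [sum_comm, add_comm]
      _ ≤ 1 + ∑ y, P x y * g y := by gcongr with y; exacts [hP x y, ih y]
      _ ≤ g x := by linarith [hdrift x hx]

theorem expectedTime_le_of_drift (hP : ∀ x y, 0 ≤ P x y) {g : Point n → ℝ} (hg : ∀ x, 0 ≤ g x)
    (hdrift : ∀ x, x ≠ opt → ∑ y, P x y * g y ≤ g x - 1) {M : ℝ} (hgM : ∀ x, g x ≤ M)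
    (k : ℕ) : expectedTime n P opt k ≤ ENNReal.ofReal (k * M) := by
  set c : ℝ := (Fintype.card (Point n) : ℝ)⁻¹
  have hc : 0 ≤ c := by positivity
  have hsum : ∀ T, ∑ t ∈ range T, c * ∑ x, survive n P opt t x ≤ M := fun T =>
    calc ∑ t ∈ range T, c * ∑ x, survive n P opt t x
        = c * ∑ x, ∑ t ∈ range T, survive n P opt t x := by rw [← mul_sum, sum_comm]
      _ ≤ c * ∑ _x : Point n, M := by
          gcongr with x; exact (sum_range_survive_le hP hg hdrift T x).trans (hgM x)
      _ = M := by simp [c, card_univ]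
  rw [expectedTime, ENNReal.ofReal_mul (Nat.cast_nonneg k), ENNReal.ofReal_natCast]
  gcongr
  refine ENNReal.tsum_le_of_sum_range_le fun T => ?_
  rw [← ENNReal.ofReal_sum_of_nonneg fun t _ =>
    mul_nonneg hc (sum_nonneg fun x _ => survive_nonneg hP t x)]
  exact ENNReal.ofReal_le_ofReal (hsum T)

end AdditiveDrift

section EA

variable {n : ℕ} {p : ℝ}

lemma stepEA_nonneg (hn : n ≠ 0) (hp0 : 0 ≤ p) (hp1 : p ≤ 1) (x z : Point n) :
    0 ≤ stepEA n p x z :=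
  step_nonneg mutProb_nonneg (oneBitNoise_nonneg hp0 hp1) (sum_oneBitNoise hn) x z

lemma sum_stepEA (x : Point n) : ∑ z, stepEA n p x z = 1 :=
  sum_step sum_mutProb x

lemma sum_stepEA_LO_lt_le (hn : n ≠ 0) (hp0 : 0 ≤ p) (hp1 : p ≤ 1) (x : Point n) :
    ∑ y ∈ univ.filter (fun y => LO y < LO x), stepEA n p x y ≤ 2 * p := by
  refine sum_step_le mutProb_nonneg sum_mutProb (by simp) (by positivity) fun y hy => ?_
  have hlt : (LO y : ℝ) < LO x := by exact_mod_cast (mem_filter.1 hy).2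
  have := accProb_add_mul_le_one (f := fun y => (LO y : ℝ)) (oneBitNoise_nonneg hp0 hp1)
    (sum_oneBitNoise hn) hlt
  rw [oneBitNoise_self, oneBitNoise_self] at this
  nlinarith

lemma inv_le_sum_stepEA_lt_LO (hn : n ≠ 0) (hp0 : 0 ≤ p) (hp : p ≤ 1 / 2) {x : Point n}
    (hx : x ≠ allOnes n) :
    (4 * Real.exp 1 * n)⁻¹ ≤ ∑ y ∈ univ.filter (fun y => LO x < LO y), stepEA n p x y := by
  obtain ⟨k, hk, hlt⟩ := exists_first_false hx
  set z := Function.update x k true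
  have hzx : z ≠ x := fun h => by simpa [z, hk] using congrFun h k
  have hz : z ∈ univ.filter (fun y => LO x < LO y) := by
    simpa [LO_eq_of_first_false hk hlt] using lt_LO_update hlt
  have hLO : (LO x : ℝ) ≤ LO z := by exact_mod_cast (mem_filter.1 hz).2.le
  have hp2 : 1 / 4 ≤ (1 - p) * (1 - p) := by nlinarith
  calc (4 * Real.exp 1 * n)⁻¹ = 1 / n * Real.exp (-1) * (1 / 4) := by
        rw [Real.exp_neg]; field_simp
    _ ≤ mutProb n x z * ((1 - p) * (1 - p)) := by
        have hmut := mutProb_nonneg x z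
        rw [mutProb_of_hammingDist_eq_one (hammingDist_update_of_ne (by simp [hk]))] at hmut ⊢
        exact mul_le_mul (mul_le_mul_of_nonneg_left (exp_neg_one_le_one_sub_inv_pow hn)
          (by positivity)) hp2 (by norm_num) hmut
    _ ≤ mutProb n x z * accProb n (oneBitNoise n p) (fun y => (LO y : ℝ)) x z := by
        refine mul_le_mul_of_nonneg_left ?_ (mutProb_nonneg x z)
        simpa only [oneBitNoise_self] using
          mul_le_accProb (f := fun y => (LO y : ℝ)) (oneBitNoise_nonneg hp0 (by linarith)) hLO
    _ = stepEA n p x z := (step_of_ne hzx).symm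
    _ ≤ ∑ y ∈ univ.filter (fun y => LO x < LO y), stepEA n p x y :=
        single_le_sum (fun y _ => stepEA_nonneg hn hp0 (by linarith) x y) hz

lemma levelPotential_add_one_le_sum_stepEA (hn : n ≠ 0) (hp0 : 0 ≤ p) (hp : p ≤ 1 / 2)
    {x : Point n} (hx : x ≠ allOnes n) :
    levelPotential (4 * Real.exp 1 * n) (2 * p) (LO x) + 1 ≤
      ∑ y, stepEA n p x y * levelPotential (4 * Real.exp 1 * n) (2 * p) (LO y) :=
  levelPotential_add_one_le_sum (by positivity) (by positivity)
    (stepEA_nonneg hn hp0 (by linarith) x) (sum_stepEA x) LO (LO x)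
    (sum_stepEA_LO_lt_le hn hp0 (by linarith) x) (inv_le_sum_stepEA_lt_LO hn hp0 hp hx)

end EA

/-- **Theorem (upper bound for the (1+1) EA on LeadingOnes with one-bit prior noise).**
There exist constants `C, c > 0` such that for every `n ≥ 1` and every
`0 ≤ p ≤ 1/2`, the expected optimisation time of the (1+1) EA with one-bit
prior noise probability `p` on LeadingOnes is at most `C · n² · e^(c·p·n²)`. -/
theorem EA_LeadingOnes_noise_upper_bound :
    ∃ C c : ℝ, 0 < C ∧ 0 < c ∧
      ∀ n : ℕ, 1 ≤ n → ∀ p : ℝ, 0 ≤ p → p ≤ 1 / 2 →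
        EAtime n p ≤ ENNReal.ofReal (C * n ^ 2 * Real.exp (c * p * n ^ 2)) := by
  refine ⟨8 * Real.exp 1, 8 * Real.exp 1, by positivity, by positivity, fun n hn p hp0 hp => ?_⟩
  have hn0 : n ≠ 0 := Nat.one_le_iff_ne_zero.1 hn
  have hA : 0 ≤ 4 * Real.exp 1 * n := by positivity
  have hq : 0 ≤ 2 * p := by positivity
  set S := levelPotential (4 * Real.exp 1 * n) (2 * p)
  have hS0 := levelPotential_nonneg hA hq
  have hmono := levelPotential_mono hA hq
  have hbound := levelPotential_le_mul_exp hA hq n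
  have hdrift : ∀ x, x ≠ allOnes n →
      ∑ y, stepEA n p x y * (S n - S (LO y)) ≤ (S n - S (LO x)) - 1 := fun x hx => by
    have := levelPotential_add_one_le_sum_stepEA hn0 hp0 hp hx
    simp only [mul_sub, sum_sub_distrib, ← sum_mul, sum_stepEA, one_mul]
    linarith
  calc EAtime n p ≤ ENNReal.ofReal (2 * S n) :=
        expectedTime_le_of_drift (stepEA_nonneg hn0 hp0 (by linarith))
          (g := fun x => S n - S (LO x)) (fun x => sub_nonneg.2 (hmono (LO_le x))) hdrift
          (fun x => sub_le_self _ (hS0 _)) 2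
    _ ≤ ENNReal.ofReal (8 * Real.exp 1 * n ^ 2 * Real.exp (8 * Real.exp 1 * p * n ^ 2)) := by
        refine ENNReal.ofReal_le_ofReal ?_
        rw [show 8 * Real.exp 1 * p * n ^ 2 = 4 * Real.exp 1 * n * (2 * p) * n by ring]
        linarith
end

section
/- Let n ≥ 1, λ ∈ ℕ, p ∈ [0,1] and set q := (1 − 1/n)^n. Then (i) Σ_{i=0}^{λ} C(λ,i)·q^i·(1−q)^{λ−i}·p^{i+1} = p·(1 − q·(1−p))^λ, and (ii) (1 − (1 − 1/n)^n·(1−p))^λ ≤ ((e − (1−p))/e)^λ · exp((λ/n)·(1−p)/(e − (1−p))). Consequently, the probability that all copies of the parent among parent and λ offspring are affected by noise is at most p·((e−(1−p))/e)^λ·exp((λ/n)·(1−p)/(e−(1−p))). -/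
/-!
Part (i) is the binomial theorem for `(q p + (1 - q))^λ`. For (ii), `(1 - 1/n)^(n-1) ≥ 1/e`
gives `q ≥ (1 - 1/n)/e`, hence with `s = 1 - p`
`1 - q s ≤ 1 - s (1 - 1/n)/e = ((e - s)/e) · (1 + s/(n (e - s)))`,
and `1 + x ≤ eˣ` bounds the λ-th power of the second factor.
-/

open Real Finset

theorem sum_choose_mul_pow_mul_pow_mul_pow_succ {R : Type*} [CommRing R] (q p : R) (m : ℕ) :
    ∑ i ∈ range (m + 1), (m.choose i : R) * q ^ i * (1 - q) ^ (m - i) * p ^ (i + 1)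
      = p * (1 - q * (1 - p)) ^ m := by
  rw [show 1 - q * (1 - p) = q * p + (1 - q) by ring, add_pow, mul_sum]
  refine sum_congr rfl fun i _ => ?_
  ring

theorem exp_neg_one_le_one_sub_inv_pow_s14 (m : ℕ) : exp (-1) ≤ (1 - 1 / (m + 1 : ℝ)) ^ m := by
  rcases eq_or_ne m 0 with rfl | hm
  · simp
  have hm' : (0 : ℝ) < m := by positivity
  rw [show 1 - 1 / (m + 1 : ℝ) = (1 + (m : ℝ)⁻¹)⁻¹ by field_simp; ring, inv_pow, exp_neg]
  exact inv_anti₀ (by positivity) one_add_inv_pow_le_exp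

theorem one_sub_inv_le_exp_mul_pow {n : ℕ} (hn : n ≠ 0) :
    1 - 1 / (n : ℝ) ≤ exp 1 * (1 - 1 / n) ^ n := by
  obtain ⟨m, rfl⟩ := Nat.exists_eq_succ_of_ne_zero hn
  have ht : 0 ≤ 1 - 1 / (m + 1 : ℝ) := by
    rw [sub_nonneg, div_le_one (by positivity)]; linarith [m.cast_nonneg (α := ℝ)]
  push_cast
  calc 1 - 1 / (m + 1 : ℝ) = exp 1 * exp (-1) * (1 - 1 / (m + 1)) := by
        rw [← exp_add]; simp
    _ ≤ exp 1 * (1 - 1 / (m + 1 : ℝ)) ^ m * (1 - 1 / (m + 1)) := by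
        gcongr; exact exp_neg_one_le_one_sub_inv_pow_s14 m
    _ = exp 1 * (1 - 1 / (m + 1 : ℝ)) ^ (m + 1) := by ring

theorem pow_mul_one_add_le_pow_mul_exp {A B : ℝ} (hA : 0 ≤ A) (hB : 0 ≤ B) (m : ℕ) :
    (A * (1 + B)) ^ m ≤ A ^ m * exp (m * B) := by
  rw [mul_pow, exp_nat_mul]
  gcongr
  linarith [add_one_le_exp B]

theorem one_sub_mul_one_sub_inv_div_pow_le {x s c : ℝ} (hx : 0 < x) (hs : 0 ≤ s) (hsc : s < c)
    (m : ℕ) :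
    (1 - s * (1 - 1 / x) / c) ^ m ≤ ((c - s) / c) ^ m * exp (m / x * s / (c - s)) := by
  have hc : 0 < c := hs.trans_lt hsc
  have hcs : 0 < c - s := sub_pos.2 hsc
  have hfactor : 1 - s * (1 - 1 / x) / c = (c - s) / c * (1 + s / (x * (c - s))) := by
    field_simp; ring
  rw [hfactor, show (m : ℝ) / x * s / (c - s) = m * (s / (x * (c - s))) by field_simp]
  exact pow_mul_one_add_le_pow_mul_exp (by positivity) (by positivity) m

/-- **Lemma (all copies of the parent affected by noise).**
Let `n ≥ 1`, `λ ∈ ℕ`, `p ∈ [0,1]` and `q := (1 − 1/n)^n` (the probability that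
standard bit mutation creates a clone of the parent). Then
(i) `Σ_{i=0}^{λ} C(λ,i)·q^i·(1−q)^{λ−i}·p^{i+1} = p·(1 − q·(1−p))^λ`,
(ii) `(1 − (1−1/n)^n·(1−p))^λ ≤ ((e−(1−p))/e)^λ · exp((λ/n)·(1−p)/(e−(1−p)))`,
and consequently the probability that all copies of the parent among parent and
`λ` offspring are affected by noise is at most
`p·((e−(1−p))/e)^λ·exp((λ/n)·(1−p)/(e−(1−p)))`. -/
theorem all_clones_noisy_bound (n lam : ℕ) (p : ℝ)
    (hn : 1 ≤ n) (hp0 : 0 ≤ p) (hp1 : p ≤ 1) :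
    (∑ i ∈ Finset.range (lam + 1),
        (lam.choose i : ℝ) * ((1 - 1 / n) ^ n) ^ i
          * (1 - (1 - 1 / n) ^ n) ^ (lam - i) * p ^ (i + 1)
      = p * (1 - (1 - 1 / n) ^ n * (1 - p)) ^ lam)
    ∧ (1 - (1 - 1 / n) ^ n * (1 - p)) ^ lam
        ≤ ((Real.exp 1 - (1 - p)) / Real.exp 1) ^ lam
          * Real.exp ((lam / n) * (1 - p) / (Real.exp 1 - (1 - p)))
    ∧ p * (1 - (1 - 1 / n) ^ n * (1 - p)) ^ lam
        ≤ p * (((Real.exp 1 - (1 - p)) / Real.exp 1) ^ lam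
            * Real.exp ((lam / n) * (1 - p) / (Real.exp 1 - (1 - p)))) := by
  set q : ℝ := (1 - 1 / n) ^ n
  have hn' : (0 : ℝ) < n := by exact_mod_cast hn
  have ht0 : 0 ≤ 1 - 1 / (n : ℝ) := by
    rw [sub_nonneg, div_le_one hn']; exact_mod_cast hn
  have hq1 : q ≤ 1 := pow_le_one₀ ht0 (by linarith [one_div_pos.2 hn'])
  have he : 1 < exp 1 := one_lt_exp_iff.2 one_pos
  have hq : (1 - p) * (1 - 1 / n) / exp 1 ≤ (1 - p) * q := by
    rw [div_le_iff₀ (by positivity), mul_assoc, mul_comm q]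
    exact mul_le_mul_of_nonneg_left (one_sub_inv_le_exp_mul_pow (by omega)) (by linarith)
  have hbound : (1 - q * (1 - p)) ^ lam ≤ ((exp 1 - (1 - p)) / exp 1) ^ lam
      * exp (lam / n * (1 - p) / (exp 1 - (1 - p))) :=
    (pow_le_pow_left₀ (by nlinarith) (by linarith) lam).trans
      (one_sub_mul_one_sub_inv_div_pow_le hn' (by linarith) (by linarith) lam)
  exact ⟨sum_choose_mul_pow_mul_pow_mul_pow_succ q p lam, hbound,
    mul_le_mul_of_nonneg_left hbound hp0⟩
end
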